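/- Let (X_i)_{i∈ℤ} be a stationary process over a finite alphabet 𝕏 and let K : 𝕏^k → ℝ be any code-length function satisfying the Kraft inequality Σ_{w∈𝕏^k} 2^{−K(w)} ≤ 1. Then for every positive integer n ≥ k, E[K(X_1^k)] − E[H(k, X_1^n)] ≥ H(X_1^k) − H(X_1^k|ℐ) = I(X_1^k; ℐ), the mutual information between the block X_1^k and the shift-invariant σ-algebra ℐ. -/

import Mathlib

open MeasureTheory Filter Real

variable {𝕏 : Type*} [Fintype 𝕏] [Nonempty 𝕏] [DecidableEq 𝕏]
  [MeasurableSpace 𝕏] [MeasurableSingletonClass 𝕏]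

/-- The left shift on two-sided sequences: `(shift ω) i = ω (i + 1)`. -/
def shift (ω : ℤ → 𝕏) : ℤ → 𝕏 := fun i => ω (i + 1)

/-- The block `X_{s+1}^{s+l}` of a sequence `ω`, as a tuple in `𝕏^l`. -/
def blk (s l : ℕ) (ω : ℤ → 𝕏) : Fin l → 𝕏 := fun i => ω ((s : ℤ) + 1 + (i : ℤ))

/-- Shannon entropy (base 2) of a distribution `p` on a finite set:
`H(p) = -∑_{w : p w > 0} p w * log₂ (p w)` (`logb 2 0 = 0`, so zero-mass
points contribute nothing). -/
noncomputable def Hent {A : Type*} [Fintype A] (p : A → ℝ) : ℝ :=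
  -∑ w, p w * Real.logb 2 (p w)

/-- Empirical nonoverlapping-block distribution
`p_k(w, x_1^n) = ⌊n/k⌋⁻¹ ∑_{i=1}^{⌊n/k⌋} 1[x_{(i-1)k+1}^{ik} = w]`. -/
noncomputable def empDist (k n : ℕ) (ω : ℤ → 𝕏) : (Fin k → 𝕏) → ℝ :=
  fun w => (∑ i ∈ Finset.range (n / k), if blk (i * k) k ω = w then (1 : ℝ) else 0) / (n / k : ℕ)

/-- Plug-in estimator `H(k, x_1^n)` of the block entropy. -/
noncomputable def plugIn (k n : ℕ) (ω : ℤ → 𝕏) : ℝ := Hent (empDist k n ω)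

/-- True block distribution `p_k(w) = P(X_1^k = w)`. -/
noncomputable def pblock (μ : Measure (ℤ → 𝕏)) (k : ℕ) : (Fin k → 𝕏) → ℝ :=
  fun w => (μ {ω | blk 0 k ω = w}).toReal

/-- Block entropy `H(k) = H(p_k)`. -/
noncomputable def Hblock (μ : Measure (ℤ → 𝕏)) (k : ℕ) : ℝ := Hent (pblock μ k)

/-- Number `D(k, x_1^n)` of distinct nonoverlapping `k`-blocks in `x_1^n`. -/
noncomputable def Dcount (k n : ℕ) (ω : ℤ → 𝕏) : ℕ :=
  Set.ncard {w : Fin k → 𝕏 | ∃ i < n / k, blk (i * k) k ω = w}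

/-- Length bound `K(k, x_1^n)` of the modified `k`-block code:
`K(k,x_1^n) = 2 log₂ k + (n/k)(H(k,x_1^n) + 2) + 3 k log₂|𝕏| (D(k,x_1^n) + 1)`. -/
noncomputable def Kcode (k n : ℕ) (ω : ℤ → 𝕏) : ℝ :=
  2 * Real.logb 2 k + ((n : ℝ) / k) * (plugIn k n ω + 2)
    + 3 * k * Real.logb 2 (Fintype.card 𝕏) * (Dcount k n ω + 1)

/-- Conditional probability `P(X_1^k = w | ℐ)` given the shift-invariant
σ-algebra `ℐ`, as a function of the sample point. -/
noncomputable def condP (μ : Measure (ℤ → 𝕏)) (k : ℕ) (w : Fin k → 𝕏) : (ℤ → 𝕏) → ℝ :=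
  μ[Set.indicator {ω | blk 0 k ω = w} (fun _ => (1 : ℝ)) | MeasurableSpace.invariants shift]

/-- Conditional block entropy `H(X_1^k | ℐ) = E[-log₂ P(X_1^k = w | ℐ)|_{w = X_1^k}]`. -/
noncomputable def condH (μ : Measure (ℤ → 𝕏)) (k : ℕ) : ℝ :=
  ∫ ω, -Real.logb 2 (condP μ k (blk 0 k ω) ω) ∂μ

/-- `σ(y) = min(2^y, 1)`. -/
noncomputable def sigmaFn (y : ℝ) : ℝ := min ((2 : ℝ) ^ y) 1

/-- Negative part `x⁻ = -x · 1[x < 0]`. -/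
noncomputable def nPart (x : ℝ) : ℝ := if x < 0 then -x else 0

/-!
The inequality splits into `H(X_1^k) ≤ E[K(X_1^k)]` and `E[H(k, X_1^n)] ≤ H(X_1^k | ℐ)`, both
instances of Gibbs' inequality `H(p) ≤ -∑ p log₂ q` for a sub-probability vector `q`. The first
takes `q = 2^{-K}`. For the second, `q = P(· | ℐ)(ω)` almost surely charges every block of the
sample, so the plug-in entropy is at most the average of `-log₂ P(X_{(i-1)k+1}^{ik} | ℐ)` over the
`⌊n/k⌋` blocks; as `P(· | ℐ)` is shift invariant and the process stationary, each term has mean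
`H(X_1^k | ℐ)`.
-/

open scoped ENNReal

lemma mul_logb_sub_mul_logb_le {p q : ℝ} (hp : 0 ≤ p) (hq : 0 ≤ q) (hpq : 0 < p → 0 < q) :
    p * logb 2 q - p * logb 2 p ≤ (q - p) / log 2 := by
  rcases hp.eq_or_lt with rfl | hp
  · simpa using div_nonneg hq (log_pos one_lt_two).le
  have hq' := hpq hp
  have h := mul_le_mul_of_nonneg_left (log_le_sub_one_of_pos (div_pos hq' hp)) hp.le
  rw [log_div hq'.ne' hp.ne', mul_sub_one, mul_div_cancel₀ _ hp.ne'] at h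
  calc p * logb 2 q - p * logb 2 p = p * (log q - log p) / log 2 := by simp only [logb]; ring
    _ ≤ (q - p) / log 2 := by gcongr

theorem Hent_le_neg_sum_mul_logb {A : Type*} [Fintype A] {p q : A → ℝ} (hp : ∀ w, 0 ≤ p w)
    (hp1 : ∑ w, p w = 1) (hq : ∀ w, 0 ≤ q w) (hq1 : ∑ w, q w ≤ 1)
    (hpq : ∀ w, 0 < p w → 0 < q w) :
    Hent p ≤ -∑ w, p w * logb 2 (q w) := by
  have h := Finset.sum_le_sum fun w (_ : w ∈ Finset.univ) =>
    mul_logb_sub_mul_logb_le (hp w) (hq w) (hpq w)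
  rw [Finset.sum_sub_distrib, ← Finset.sum_div, Finset.sum_sub_distrib, hp1] at h
  have : (∑ w, q w - 1) / log 2 ≤ 0 :=
    div_nonpos_of_nonpos_of_nonneg (by linarith) (log_pos one_lt_two).le
  unfold Hent
  linarith

lemma Hent_nonneg {A : Type*} [Fintype A] {p : A → ℝ} (hp0 : ∀ w, 0 ≤ p w)
    (hp1 : ∀ w, p w ≤ 1) : 0 ≤ Hent p :=
  neg_nonneg.mpr <| Finset.sum_nonpos fun w _ =>
    mul_nonpos_of_nonneg_of_nonpos (hp0 w) (logb_nonpos one_lt_two (hp0 w) (hp1 w))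

-- `-log₂ p ≤ ⌈-log₂ p⌉`, and `p < 2⁻ʲ` for every `j` below that ceiling (trivially so if `p ≤ 0`).
lemma ofReal_neg_logb_le_tsum_indicator (p : ℝ) :
    ENNReal.ofReal (-logb 2 p) ≤ ∑' j : ℕ, {x : ℝ | x ≤ 2⁻¹ ^ j}.indicator 1 p := by
  set N := ⌈-logb 2 p⌉₊
  have hle : ∀ j ∈ Finset.range N, p ≤ 2⁻¹ ^ j := by
    intro j hj
    rcases le_or_gt p 0 with hp | hp
    · exact hp.trans (by positivity)
    have hj : logb 2 p < -j := by linarith [Nat.lt_ceil.mp (Finset.mem_range.mp hj)]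
    rw [logb_lt_iff_lt_rpow one_lt_two hp, rpow_neg zero_le_two, rpow_natCast, ← inv_pow] at hj
    exact hj.le
  calc ENNReal.ofReal (-logb 2 p) ≤ N := ENNReal.ofReal_le_natCast.mpr (Nat.le_ceil _)
    _ = ∑ j ∈ Finset.range N, {x : ℝ | x ≤ 2⁻¹ ^ j}.indicator 1 p := by
      rw [Finset.sum_congr rfl fun j hj =>
        Set.indicator_of_mem (show p ∈ {x : ℝ | x ≤ 2⁻¹ ^ j} from hle j hj) 1]
      simp
    _ ≤ _ := ENNReal.sum_le_tsum _

lemma measurable_logb {b : ℝ} : Measurable (logb b) :=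
  measurable_log.div_const _

section CondExpIndicator

variable {Ω : Type*} {m mΩ : MeasurableSpace Ω} {μ : Measure Ω} [IsFiniteMeasure μ] {A : Set Ω}

lemma measureReal_inter_condExp_indicator_le (hm : m ≤ mΩ) (hA : MeasurableSet A) (c : ℝ) :
    μ.real (A ∩ {ω | μ[A.indicator (fun _ => (1 : ℝ)) | m] ω ≤ c})
      ≤ c * μ.real {ω | μ[A.indicator (fun _ => (1 : ℝ)) | m] ω ≤ c} := by
  set S := {ω | μ[A.indicator (fun _ => (1 : ℝ)) | m] ω ≤ c}
  have hS : MeasurableSet[m] S :=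
    measurableSet_le stronglyMeasurable_condExp.measurable measurable_const
  calc μ.real (A ∩ S) = ∫ ω in S, A.indicator (fun _ => (1 : ℝ)) ω ∂μ := by
        rw [setIntegral_indicator hA, setIntegral_const, Set.inter_comm, smul_eq_mul, mul_one]
    _ = ∫ ω in S, μ[A.indicator (fun _ => (1 : ℝ)) | m] ω ∂μ :=
        (setIntegral_condExp hm ((integrable_const 1).indicator hA) hS).symm
    _ ≤ ∫ _ in S, c ∂μ :=
        setIntegral_mono_on integrable_condExp.integrableOn (integrable_const c).integrableOn
          (hm S hS) fun _ hω => hω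
    _ = c * μ.real S := by rw [setIntegral_const, smul_eq_mul, mul_comm]

lemma ae_pos_condExp_indicator (hm : m ≤ mΩ) (hA : MeasurableSet A) :
    ∀ᵐ ω ∂μ, ω ∈ A → 0 < μ[A.indicator (fun _ => (1 : ℝ)) | m] ω := by
  have h := measureReal_inter_condExp_indicator_le (μ := μ) hm hA 0
  rw [zero_mul] at h
  have hnull := (measureReal_eq_zero_iff (measure_ne_top μ _)).mp (le_antisymm h measureReal_nonneg)
  rw [ae_iff]
  refine measure_mono_null (fun ω hω => ?_) hnull
  push Not at hω
  exact hω

lemma condExp_indicator_le_one (hm : m ≤ mΩ) (hA : MeasurableSet A) :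
    ∀ᵐ ω ∂μ, μ[A.indicator (fun _ => (1 : ℝ)) | m] ω ≤ 1 := by
  have h := condExp_mono (m := m) ((integrable_const (1 : ℝ)).indicator hA)
    (integrable_const (1 : ℝ)) (ae_of_all μ (Set.indicator_le_self' fun _ _ => zero_le_one))
  rwa [condExp_const hm] at h

-- The part of `A` where `P(A | m) ≤ 2⁻ʲ` has measure at most `2⁻ʲ μ(Ω)`, so the integral is at
-- most `∑ⱼ 2⁻ʲ μ(Ω)`.
theorem integrable_indicator_neg_logb_condExp_indicator (hm : m ≤ mΩ) (hA : MeasurableSet A) :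
    Integrable (A.indicator fun ω => -logb 2 (μ[A.indicator (fun _ => (1 : ℝ)) | m] ω)) μ := by
  set P := μ[A.indicator (fun _ => (1 : ℝ)) | m]
  have hP : Measurable P := (stronglyMeasurable_condExp.mono hm).measurable
  have hS : ∀ j : ℕ, MeasurableSet (A ∩ {ω | P ω ≤ 2⁻¹ ^ j}) := fun j =>
    hA.inter (measurableSet_le hP measurable_const)
  have hnonneg : 0 ≤ᵐ[μ] A.indicator fun ω => -logb 2 (P ω) := by
    filter_upwards [condExp_nonneg (m := m) (ae_of_all μ fun ω =>
        Set.indicator_nonneg (fun _ _ => (zero_le_one : (0 : ℝ) ≤ 1)) ω),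
      condExp_indicator_le_one hm hA] with ω h0 h1
    exact Set.indicator_nonneg (fun _ _ => neg_nonneg.mpr (logb_nonpos one_lt_two h0 h1)) ω
  have hbound : ∀ ω, ENNReal.ofReal (A.indicator (fun ω => -logb 2 (P ω)) ω)
      ≤ ∑' j : ℕ, (A ∩ {ω | P ω ≤ 2⁻¹ ^ j}).indicator 1 ω := by
    intro ω
    by_cases hω : ω ∈ A
    · simpa [Set.indicator, hω] using ofReal_neg_logb_le_tsum_indicator (P ω)
    · simp [hω]
  refine ⟨((measurable_logb.comp hP).neg.indicator hA).aestronglyMeasurable,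
    (hasFiniteIntegral_iff_ofReal hnonneg).mpr ?_⟩
  calc ∫⁻ ω, ENNReal.ofReal (A.indicator (fun ω => -logb 2 (P ω)) ω) ∂μ
      ≤ ∫⁻ ω, ∑' j : ℕ, (A ∩ {ω | P ω ≤ 2⁻¹ ^ j}).indicator 1 ω ∂μ := lintegral_mono hbound
    _ = ∑' j : ℕ, μ (A ∩ {ω | P ω ≤ 2⁻¹ ^ j}) := by
        rw [lintegral_tsum fun j => (measurable_one.indicator (hS j)).aemeasurable]
        simp_rw [lintegral_indicator_one (hS _)]
    _ ≤ ∑' j : ℕ, ENNReal.ofReal (2⁻¹ ^ j * μ.real Set.univ) := by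
        refine ENNReal.tsum_le_tsum fun j => ?_
        rw [← ofReal_measureReal]
        exact ENNReal.ofReal_le_ofReal <| (measureReal_inter_condExp_indicator_le hm hA _).trans
          (mul_le_mul_of_nonneg_left (measureReal_mono (Set.subset_univ _)) (by positivity))
    _ = ENNReal.ofReal (∑' j : ℕ, 2⁻¹ ^ j * μ.real Set.univ) :=
        (ENNReal.ofReal_tsum_of_nonneg (fun _ => by positivity)
          ((summable_geometric_of_lt_one (by norm_num) (by norm_num)).mul_right _)).symm
    _ < ∞ := ENNReal.ofReal_lt_top

end CondExpIndicator

section Blocks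

variable {α : Type*}

lemma shift_iterate_apply (j : ℕ) (ω : ℤ → α) (i : ℤ) : shift^[j] ω i = ω (i + j) := by
  induction j generalizing ω with
  | zero => simp
  | succ j ih => rw [Function.iterate_succ_apply, ih, shift]; push_cast; ring_nf

lemma blk_shift_iterate (s j l : ℕ) (ω : ℤ → α) : blk s l (shift^[j] ω) = blk (s + j) l ω := by
  funext i
  simp only [blk, shift_iterate_apply]
  push_cast
  ring_nf

lemma measurable_blk [MeasurableSpace α] (s l : ℕ) : Measurable (blk (𝕏 := α) s l) :=
  measurable_pi_lambda _ fun _ => measurable_pi_apply _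

variable [MeasurableSpace α] [MeasurableSingletonClass α] {μ : Measure (ℤ → α)} {k : ℕ}

lemma measurableSet_blk_eq (s : ℕ) (w : Fin k → α) : MeasurableSet {ω : ℤ → α | blk s k ω = w} :=
  measurable_blk s k (measurableSet_singleton w)

variable [Fintype α]

lemma integral_comp_blk [IsFiniteMeasure μ] (f : (Fin k → α) → ℝ) :
    ∫ ω, f (blk 0 k ω) ∂μ = ∑ w, pblock μ k w * f w := by
  rw [← integral_map (measurable_blk 0 k).aemeasurable
      (Measurable.of_discrete).aestronglyMeasurable,
    integral_fintype (Integrable.of_finite)]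
  refine Finset.sum_congr rfl fun w _ => ?_
  rw [map_measureReal_apply (measurable_blk 0 k) (measurableSet_singleton w), smul_eq_mul]
  rfl

lemma sum_pblock [IsProbabilityMeasure μ] : ∑ w, pblock μ k w = 1 := by
  simpa using (integral_comp_blk (μ := μ) fun _ => (1 : ℝ)).symm

theorem Hblock_le_integral_of_kraft [IsProbabilityMeasure μ] (K : (Fin k → α) → ℝ)
    (hKraft : ∑ w, (2 : ℝ) ^ (-(K w)) ≤ 1) :
    Hblock μ k ≤ ∫ ω, K (blk 0 k ω) ∂μ := by
  have hpos : ∀ w, 0 < (2 : ℝ) ^ (-(K w)) := fun w => rpow_pos_of_pos two_pos _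
  calc Hblock μ k ≤ -∑ w, pblock μ k w * logb 2 ((2 : ℝ) ^ (-(K w))) :=
        Hent_le_neg_sum_mul_logb (fun _ => measureReal_nonneg) sum_pblock (fun w => (hpos w).le)
          hKraft fun w _ => hpos w
    _ = ∫ ω, K (blk 0 k ω) ∂μ := by
        simp [integral_comp_blk, logb_rpow two_pos (by norm_num : (2 : ℝ) ≠ 1)]

end Blocks

section Empirical

variable {α : Type*} [DecidableEq α] {k n : ℕ} {ω : ℤ → α}

lemma empDist_nonneg (w : Fin k → α) : 0 ≤ empDist k n ω w :=
  div_nonneg (Finset.sum_nonneg fun _ _ => by positivity) (Nat.cast_nonneg _)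

lemma exists_blk_eq_of_empDist_pos {w : Fin k → α} (hw : 0 < empDist k n ω w) :
    ∃ i < n / k, blk (i * k) k ω = w := by
  by_contra! h
  refine hw.ne' (?_ : empDist k n ω w = 0)
  simp [empDist, Finset.sum_ite_of_false fun i hi => h i (Finset.mem_range.mp hi)]

variable [Fintype α]

lemma sum_empDist_mul (f : (Fin k → α) → ℝ) :
    ∑ w, empDist k n ω w * f w
      = (∑ i ∈ Finset.range (n / k), f (blk (i * k) k ω)) / (n / k : ℕ) := by
  simp only [empDist, div_mul_eq_mul_div, ← Finset.sum_div, Finset.sum_mul, ite_mul, one_mul,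
    zero_mul]
  rw [Finset.sum_comm]
  simp

lemma sum_empDist (hkn : 0 < n / k) : ∑ w, empDist k n ω w = 1 := by
  have hkn' : ((n / k : ℕ) : ℝ) ≠ 0 := Nat.cast_ne_zero.mpr hkn.ne'
  simpa [hkn'] using sum_empDist_mul (k := k) (n := n) (ω := ω) fun _ => (1 : ℝ)

lemma plugIn_nonneg (hkn : 0 < n / k) : 0 ≤ plugIn k n ω :=
  Hent_nonneg empDist_nonneg fun w =>
    (Finset.single_le_sum (fun w _ => empDist_nonneg w) (Finset.mem_univ w)).trans_eq
      (sum_empDist hkn)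

theorem plugIn_le_average_neg_logb (hkn : 0 < n / k) {q : (Fin k → α) → ℝ}
    (hq : ∀ w, 0 ≤ q w) (hq1 : ∑ w, q w ≤ 1) (hqblk : ∀ i < n / k, 0 < q (blk (i * k) k ω)) :
    plugIn k n ω
      ≤ (∑ i ∈ Finset.range (n / k), -logb 2 (q (blk (i * k) k ω))) / (n / k : ℕ) := by
  have hsupp : ∀ w, 0 < empDist k n ω w → 0 < q w := fun w hw => by
    obtain ⟨i, hi, rfl⟩ := exists_blk_eq_of_empDist_pos hw
    exact hqblk i hi
  calc plugIn k n ω ≤ -∑ w, empDist k n ω w * logb 2 (q w) :=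
        Hent_le_neg_sum_mul_logb empDist_nonneg (sum_empDist hkn) hq hq1 hsupp
    _ = _ := by rw [sum_empDist_mul, Finset.sum_neg_distrib, neg_div]

end Empirical

section Stationary

variable {α : Type*} [MeasurableSpace α] {μ : Measure (ℤ → α)} {k : ℕ}

lemma condP_shift_iterate (w : Fin k → α) (j : ℕ) (ω : ℤ → α) :
    condP μ k w (shift^[j] ω) = condP μ k w ω :=
  congr_fun (MeasurableSpace.comp_eq_of_measurable_invariants <|
    stronglyMeasurable_condExp.measurable.mono (MeasurableSpace.le_invariants_iterate _ j) le_rfl) ω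

lemma condP_nonneg (w : Fin k → α) : ∀ᵐ ω ∂μ, 0 ≤ condP μ k w ω :=
  condExp_nonneg <| ae_of_all μ <| Set.indicator_nonneg fun _ _ => zero_le_one

noncomputable def condInfo (μ : Measure (ℤ → α)) (k j : ℕ) (ω : ℤ → α) : ℝ :=
  -logb 2 (condP μ k (blk j k ω) ω)

lemma condInfo_eq_comp_shift_iterate (j : ℕ) : condInfo μ k j = condInfo μ k 0 ∘ shift^[j] := by
  funext ω
  simp only [condInfo, Function.comp_apply, blk_shift_iterate, zero_add, condP_shift_iterate]

lemma condInfo_zero_eq_sum [Fintype α] :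
    condInfo μ k 0 =
      fun ω => ∑ w, {ω | blk 0 k ω = w}.indicator (fun ω => -logb 2 (condP μ k w ω)) ω := by
  classical
  funext ω
  simp [condInfo, Set.indicator_apply]

variable [MeasurableSingletonClass α] [Fintype α]

lemma sum_condP [IsFiniteMeasure μ] : ∀ᵐ ω ∂μ, ∑ w, condP μ k w ω = 1 := by
  classical
  have hpartition :
      ∑ w : Fin k → α, {ω | blk 0 k ω = w}.indicator (fun _ => (1 : ℝ)) = fun _ => 1 := by
    funext ω
    simp [Set.indicator_apply]
  have h := condExp_finsetSum (μ := μ) (s := (Finset.univ : Finset (Fin k → α)))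
    (fun w _ => (integrable_const (1 : ℝ)).indicator (measurableSet_blk_eq 0 w))
    (MeasurableSpace.invariants shift)
  rw [hpartition, condExp_const (MeasurableSpace.invariants_le shift)] at h
  filter_upwards [h] with ω hω
  simpa [condP] using hω.symm

lemma ae_condP_blk_pos [IsFiniteMeasure μ] (hstat : MeasurePreserving shift μ μ) (j : ℕ) :
    ∀ᵐ ω ∂μ, 0 < condP μ k (blk j k ω) ω := by
  have h0 : ∀ᵐ ω ∂μ, 0 < condP μ k (blk 0 k ω) ω := by
    filter_upwards [ae_all_iff.mpr fun w => ae_pos_condExp_indicator (μ := μ)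
      (MeasurableSpace.invariants_le shift) (measurableSet_blk_eq 0 w)] with ω hω
    exact hω _ rfl
  filter_upwards [(hstat.iterate j).quasiMeasurePreserving.ae h0] with ω hω
  rwa [blk_shift_iterate, zero_add, condP_shift_iterate] at hω

lemma integrable_condInfo [IsFiniteMeasure μ] (hstat : MeasurePreserving shift μ μ) (j : ℕ) :
    Integrable (condInfo μ k j) μ := by
  have h0 : Integrable (condInfo μ k 0) μ := by
    rw [condInfo_zero_eq_sum]
    exact integrable_finsetSum _ fun w _ => integrable_indicator_neg_logb_condExp_indicator
      (MeasurableSpace.invariants_le shift) (measurableSet_blk_eq 0 w)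
  rw [condInfo_eq_comp_shift_iterate]
  exact (hstat.iterate j).integrable_comp_of_integrable h0

lemma integral_condInfo [IsFiniteMeasure μ] (hstat : MeasurePreserving shift μ μ) (j : ℕ) :
    ∫ ω, condInfo μ k j ω ∂μ = condH μ k := by
  have hT := hstat.iterate j
  rw [condInfo_eq_comp_shift_iterate]
  calc ∫ ω, condInfo μ k 0 (shift^[j] ω) ∂μ = ∫ ω, condInfo μ k 0 ω ∂μ.map shift^[j] :=
        (integral_map hT.measurable.aemeasurable
          (by rw [hT.map_eq]; exact (integrable_condInfo hstat 0).aestronglyMeasurable)).symm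
    _ = condH μ k := by rw [hT.map_eq]; rfl

theorem integral_plugIn_le_condH [DecidableEq α] [IsProbabilityMeasure μ]
    (hstat : MeasurePreserving shift μ μ) {n : ℕ} (hkn : 0 < n / k) :
    ∫ ω, plugIn k n ω ∂μ ≤ condH μ k := by
  set G : (ℤ → α) → ℝ := fun ω => (∑ i ∈ Finset.range (n / k), condInfo μ k (i * k) ω) / (n / k : ℕ)
  have hG : Integrable G μ :=
    (integrable_finsetSum _ fun i _ => integrable_condInfo hstat _).div_const _
  have hle : ∀ᵐ ω ∂μ, plugIn k n ω ≤ G ω := by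
    filter_upwards [ae_all_iff.mpr fun w => condP_nonneg (μ := μ) w, sum_condP (μ := μ) (k := k),
      ae_all_iff.mpr fun i => ae_condP_blk_pos hstat (i * k)] with ω h0 h1 hpos
    exact plugIn_le_average_neg_logb hkn h0 h1.le fun i _ => hpos i
  calc ∫ ω, plugIn k n ω ∂μ ≤ ∫ ω, G ω ∂μ :=
        integral_mono_of_nonneg (ae_of_all _ fun _ => plugIn_nonneg hkn) hG hle
    _ = condH μ k := by
        have hkn' : ((n / k : ℕ) : ℝ) ≠ 0 := Nat.cast_ne_zero.mpr hkn.ne'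
        simp only [G]
        rw [integral_div, integral_finsetSum _ fun i _ => integrable_condInfo hstat _,
          Finset.sum_congr rfl fun i _ => integral_condInfo hstat _]
        simp [hkn']

end Stationary

/-- For a stationary process over a finite alphabet and any code-length
function `K : 𝕏^k → ℝ` satisfying the Kraft inequality `∑_w 2^{−K(w)} ≤ 1`,
for every `n ≥ k`,
`E[K(X_1^k)] − E[H(k, X_1^n)] ≥ H(X_1^k) − H(X_1^k|ℐ) = I(X_1^k; ℐ)`. -/
theorem expected_code_minus_plugIn_ge_mutualInformation
    {μ : Measure (ℤ → 𝕏)} [IsProbabilityMeasure μ]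
    (hstat : MeasurePreserving shift μ μ)
    (k n : ℕ) (hk : 0 < k) (hkn : k ≤ n)
    (K : (Fin k → 𝕏) → ℝ)
    (hKraft : ∑ w, (2 : ℝ) ^ (-(K w)) ≤ 1) :
    Hblock μ k - condH μ k ≤
      (∫ ω, K (blk 0 k ω) ∂μ) - ∫ ω, plugIn k n ω ∂μ := by
  linarith [Hblock_le_integral_of_kraft (μ := μ) K hKraft,
    integral_plugIn_le_condH hstat (Nat.div_pos hkn hk)]
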